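/- arXiv:1301.1992 — 5 statements merged into one kernel-verified Lean document; each statement's English description precedes it below -/
import Mathlib

section
/- Every k-degenerate graph G with at least one edge contains a vertex v that has at least one neighbor of degree at most k and at most k neighbors of degree strictly greater than k. -/
/-- Two edges are at distance at most one: they share a vertex or
an endpoint of one is adjacent to an endpoint of the other. -/
def edgeNear {V : Type} (G : SimpleGraph V) (e f : Sym2 V) : Prop :=
  ∃ a ∈ e, ∃ b ∈ f, a = b ∨ G.Adj a b

/-- A set of edges is an induced matching of `G`. -/
def IsInducedMatching {V : Type} (G : SimpleGraph V) (M : Set (Sym2 V)) : Prop :=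
  M ⊆ G.edgeSet ∧
    ∀ e ∈ M, ∀ f ∈ M, e ≠ f → ∀ a ∈ e, ∀ b ∈ f, a ≠ b ∧ ¬ G.Adj a b

/-- An edge coloring is strong if every color class is an induced matching. -/
def IsStrongEdgeColoring {V : Type} {α : Type} (G : SimpleGraph V) (c : Sym2 V → α) : Prop :=
  ∀ k : α, IsInducedMatching G {e | e ∈ G.edgeSet ∧ c e = k}

/-- The strong chromatic index: least number of colors in a strong edge coloring. -/
noncomputable def strongChromaticIndex {V : Type} (G : SimpleGraph V) : ℕ :=
  sInf {n : ℕ | ∃ c : Sym2 V → Fin n, IsStrongEdgeColoring G c}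

/-- `G` is `k`-degenerate: every (induced) subgraph has a vertex of degree at most `k`. -/
def Degenerate {V : Type} (G : SimpleGraph V) (k : ℕ) : Prop :=
  ∀ s : Set V, s.Nonempty → ∃ v ∈ s, (G.neighborSet v ∩ s).ncard ≤ k

/-- A vertex is nice: it has a neighbor of degree at most `k` and
at most `k` neighbors of degree strictly greater than `k`. -/
def IsNice {V : Type} (G : SimpleGraph V) (k : ℕ) (v : V) : Prop :=
  (∃ w, G.Adj v w ∧ (G.neighborSet w).ncard ≤ k) ∧
    {w | G.Adj v w ∧ k < (G.neighborSet w).ncard}.ncard ≤ k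

/-- A graph is chordless if every cycle is induced: any edge joining two
vertices of a cycle is an edge of the cycle. -/
def Chordless {V : Type} (G : SimpleGraph V) : Prop :=
  ∀ (v : V) (c : G.Walk v v), c.IsCycle →
    ∀ a ∈ c.support, ∀ b ∈ c.support, G.Adj a b → s(a, b) ∈ c.edges

/-- `G` has treewidth at most `k`, via tree decompositions. -/
def TreewidthAtMost {V : Type} (G : SimpleGraph V) (k : ℕ) : Prop :=
  ∃ (ι : Type) (T : SimpleGraph ι) (B : ι → Finset V),
    T.Connected ∧ T.IsAcyclic ∧
    (∀ v : V, ∃ i, v ∈ B i) ∧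
    (∀ ⦃u v : V⦄, G.Adj u v → ∃ i, u ∈ B i ∧ v ∈ B i) ∧
    (∀ v : V, (T.induce {i | v ∈ B i}).Connected) ∧
    (∀ i, (B i).card ≤ k + 1)

/-- `H` is a minor of `G`, via branch sets. -/
def IsMinor {W V : Type} (H : SimpleGraph W) (G : SimpleGraph V) : Prop :=
  ∃ φ : W → Set V,
    (∀ w, (φ w).Nonempty) ∧
    (Pairwise fun a b => Disjoint (φ a) (φ b)) ∧
    (∀ w, (G.induce (φ w)).Connected) ∧
    (∀ a b, H.Adj a b → ∃ x ∈ φ a, ∃ y ∈ φ b, G.Adj x y)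

/-- A set of edges forming a matching (pairwise non-incident edges of `G`). -/
def IsMatchingSet {V : Type} (G : SimpleGraph V) (M : Set (Sym2 V)) : Prop :=
  M ⊆ G.edgeSet ∧ ∀ e ∈ M, ∀ f ∈ M, e ≠ f → ∀ a ∈ e, a ∉ f

theorem stmt0 {V : Type} [Fintype V] (G : SimpleGraph V) (k : ℕ)
    (hdeg : Degenerate G k) (hE : G.edgeSet.Nonempty) :
    ∃ v : V, IsNice G k v := by
  classical
  set A : Set V := {v | k < (G.neighborSet v).ncard} with hAdef
  by_cases hA : A.Nonempty
  · obtain ⟨v, hvA, hcard⟩ := hdeg A hA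
    refine ⟨v, ?_, ?_⟩
    · -- v has a neighbor of degree ≤ k
      by_contra h
      push_neg at h
      have hsub : G.neighborSet v ⊆ A := by
        intro w hw
        have := h w hw
        simpa [hAdef] using this
      have heq : G.neighborSet v ∩ A = G.neighborSet v :=
        Set.inter_eq_self_of_subset_left hsub
      rw [heq] at hcard
      have : k < (G.neighborSet v).ncard := hvA
      omega
    · have heq : {w | G.Adj v w ∧ k < (G.neighborSet w).ncard}
          = G.neighborSet v ∩ A := by
        ext w; simp [hAdef, SimpleGraph.mem_neighborSet]
      rw [heq]; exact hcard
  · -- no vertex has degree > k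
    obtain ⟨e, he⟩ := hE
    induction e using Sym2.ind with
    | _ a b =>
      rw [SimpleGraph.mem_edgeSet] at he
      refine ⟨a, ⟨b, he, ?_⟩, ?_⟩
      · by_contra h
        push_neg at h
        exact hA ⟨b, h⟩
      · have heq : {w | G.Adj a w ∧ k < (G.neighborSet w).ncard} = ∅ := by
          ext w
          simp only [Set.mem_setOf_eq, Set.mem_empty_iff_false, iff_false]
          rintro ⟨_, hw⟩
          exact hA ⟨w, hw⟩
        simp [heq]
end

section
/- Let 𝒢 be a class of graphs closed under taking minors that is not the class of all graphs, and let r be the maximum chromatic number of a member of 𝒢. Then every graph G ∈ 𝒢 of maximum degree Δ has strong chromatic index at most r(Δ+1). -/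
open Function SimpleGraph

namespace SimpleGraph

variable {V : Type} {H : SimpleGraph V}

theorem Reachable.mem_of_adj_closed {S : Set V} (hS : ∀ v ∈ S, ∀ z, H.Adj v z → z ∈ S)
    {a b : V} (h : H.Reachable a b) (ha : a ∈ S) : b ∈ S := by
  obtain ⟨p⟩ := h
  induction p with
  | nil => exact ha
  | cons hadj _ ih => exact ih (hS _ ha _ hadj)

theorem Reachable.eq_or_reachable_of_unique_adj {D : SimpleGraph V} {x a v : V}
    (hx : ∀ z, H.Adj x z → z = a) (hD : ∀ u w, H.Adj u w → u ≠ x → w ≠ x → D.Adj u w)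
    (h : H.Reachable x v) : v = x ∨ D.Reachable a v := by
  refine h.mem_of_adj_closed (S := {v | v = x ∨ D.Reachable a v}) ?_ (Or.inl rfl)
  intro v hv z hvz
  by_cases hvx : v = x
  · subst hvx
    exact Or.inr (hx z hvz ▸ Reachable.refl _)
  obtain rfl | hav := hv
  · exact absurd rfl hvx
  by_cases hzx : z = x
  · exact Or.inl hzx
  · exact Or.inr (hav.trans (hD v z hvz hvx hzx).reachable)

theorem Walk.IsPath.exists_adj_adj {x u : V} {P : H.Walk x u} (hP : P.IsPath) {v : V}
    (hv : v ∈ P.support) (hvx : v ≠ x) (hvu : v ≠ u) :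
    ∃ a ∈ P.support, ∃ b ∈ P.support, a ≠ b ∧ H.Adj v a ∧ H.Adj v b := by
  obtain ⟨i, rfl, hi⟩ := Walk.mem_support_iff_exists_getVert.1 hv
  have hi₀ : i ≠ 0 := by rintro rfl; exact hvx P.getVert_zero
  have hil : i ≠ P.length := by rintro rfl; exact hvu P.getVert_length
  refine ⟨P.getVert (i - 1), P.getVert_mem_support _, P.getVert (i + 1), P.getVert_mem_support _,
    fun h => ?_, ?_, P.adj_getVert_succ (by omega)⟩
  · have := hP.getVert_injOn (by simp; omega) (by simp; omega) h
    omega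
  · simpa [Nat.sub_add_cancel (Nat.pos_of_ne_zero hi₀)] using
      (P.adj_getVert_succ (i := i - 1) (by omega)).symm

theorem Walk.mem_support_of_adj_start [Finite V] {x u z : V} (P : H.Walk x u) (hxu : x ≠ u)
    (hx : (H.neighborSet x).ncard ≤ 1) (hz : H.Adj x z) : z ∈ P.support := by
  cases P with
  | nil => exact absurd rfl hxu
  | cons h q =>
    rw [(Set.ncard_le_one_iff (Set.toFinite _)).1 hx hz h]
    exact List.mem_cons_of_mem _ q.start_mem_support

theorem Reachable.not_reachable_of_ncard_neighborSet_le [Finite V]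
    (hdeg : ∀ v, (H.neighborSet v).ncard ≤ 2) {x u w : V} (hxu : x ≠ u) (hxw : x ≠ w)
    (huw : u ≠ w) (hx : (H.neighborSet x).ncard ≤ 1) (hu : (H.neighborSet u).ncard ≤ 1)
    (hw : (H.neighborSet w).ncard ≤ 1) (h : H.Reachable x u) : ¬ H.Reachable x w := by
  classical
  obtain ⟨P, hP⟩ := h.some.toPath
  have interior : ∀ v ∈ P.support, v ≠ x → v ≠ u → 1 < (H.neighborSet v).ncard := by
    intro v hv hvx hvu
    obtain ⟨a, -, b, -, hab, ha, hb⟩ := hP.exists_adj_adj hv hvx hvu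
    exact (Set.one_lt_ncard_iff (Set.toFinite _)).2 ⟨a, b, ha, hb, hab⟩
  -- The support of the path is closed under adjacency, so it is the whole component.
  have hclosed : ∀ v ∈ {v | v ∈ P.support}, ∀ z, H.Adj v z → z ∈ {v | v ∈ P.support} := by
    intro v hv z hz
    by_cases hvx : v = x
    · subst hvx; exact P.mem_support_of_adj_start hxu hx hz
    by_cases hvu : v = u
    · subst hvu
      simpa using P.reverse.mem_support_of_adj_start (Ne.symm hxu) hu hz
    obtain ⟨a, haP, b, hbP, hab, ha, hb⟩ := hP.exists_adj_adj hv hvx hvu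
    by_contra hzP
    have : 2 < (H.neighborSet v).ncard := (Set.two_lt_ncard_iff (Set.toFinite _)).2
      ⟨z, a, b, hz, ha, hb, fun h => hzP (h ▸ haP), fun h => hzP (h ▸ hbP), hab⟩
    exact absurd (hdeg v) (by omega)
  intro hxw'
  have := interior w (hxw'.mem_of_adj_closed hclosed P.start_mem_support) hxw.symm huw.symm
  omega

end SimpleGraph

namespace Vizing

open Classical

variable {V : Type} {k : ℕ}

/-- Partial edge colourings are maps `Sym2 V → Option (Fin k)`, with `none` marking an
uncoloured edge. -/
def Proper (c : Sym2 V → Option (Fin k)) : Prop :=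
  ∀ ⦃a : V⦄ ⦃e f : Sym2 V⦄, a ∈ e → a ∈ f → e ≠ f → (c e).isSome → c e ≠ c f

def Missing (c : Sym2 V → Option (Fin k)) (v : V) (γ : Fin k) : Prop :=
  ∀ z, c s(v, z) ≠ some γ

def EdgeColorable (G : SimpleGraph V) (k : ℕ) : Prop :=
  ∃ c : Sym2 V → Option (Fin k), (∀ e, (c e).isSome ↔ e ∈ G.edgeSet) ∧ Proper c

variable {c : Sym2 V → Option (Fin k)}

theorem Proper.eq_of_apply_eq_some (hc : Proper c) {v z₁ z₂ : V} {γ : Fin k}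
    (h₁ : c s(v, z₁) = some γ) (h₂ : c s(v, z₂) = some γ) : z₁ = z₂ := by
  by_contra hne
  exact hc (Sym2.mem_mk_left v z₁) (Sym2.mem_mk_left v z₂)
    (fun h => hne (Sym2.congr_right.1 h)) (by simp [h₁]) (h₁.trans h₂.symm)

theorem Proper.isMatchingSet {G : SimpleGraph V} (hc : Proper c)
    (hcG : ∀ e, (c e).isSome → e ∈ G.edgeSet) (γ : Fin k) : IsMatchingSet G {e | c e = some γ} :=
  ⟨fun e (he : c e = some γ) => hcG e (by simp [he]),
    fun e (he : c e = some γ) f hf hef a hae haf =>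
      hc hae haf hef (by simp [he]) (he.trans hf.symm)⟩

theorem Proper.update_none (hc : Proper c) (e₀ : Sym2 V) : Proper (update c e₀ none) := by
  intro a e f hae haf hef hs
  have he : e ≠ e₀ := by rintro rfl; simp at hs
  rw [update_of_ne he] at hs ⊢
  by_cases hf : f = e₀
  · subst hf
    simpa [Option.ne_none_iff_isSome] using hs
  · rw [update_of_ne hf]
    exact hc hae haf hef hs

theorem Proper.update_some (hc : Proper c) {x u : V} {γ : Fin k} (hx : Missing c x γ)
    (hu : Missing c u γ) : Proper (update c s(x, u) (some γ)) := by
  have key : ∀ a ∈ s(x, u), ∀ g : Sym2 V, a ∈ g → c g ≠ some γ := by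
    intro a ha g hag
    obtain ⟨z, rfl⟩ := Sym2.mem_iff_exists.1 hag
    rcases Sym2.mem_iff.1 ha with rfl | rfl
    exacts [hx z, hu z]
  intro a e f hae haf hef hs
  by_cases he : e = s(x, u)
  · subst he
    rw [update_self, update_of_ne (Ne.symm hef)]
    exact (key a hae f haf).symm
  · rw [update_of_ne he] at hs ⊢
    by_cases hf : f = s(x, u)
    · subst hf
      rw [update_self]
      exact key a haf e hae
    · rw [update_of_ne hf]
      exact hc hae haf hef hs

theorem Missing.update {v : V} {γ : Fin k} (h : Missing c v γ) (e₀ : Sym2 V) {o : Option (Fin k)}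
    (ho : o ≠ some γ) : Missing (update c e₀ o) v γ := by
  intro z
  by_cases hz : s(v, z) = e₀
  · rwa [hz, update_self]
  · rw [update_of_ne hz]
    exact h z

theorem Proper.missing_update_none (hc : Proper c) {v u : V} {γ : Fin k}
    (h : c s(v, u) = some γ) : Missing (update c s(v, u) none) v γ := by
  intro z
  by_cases hz : s(v, z) = s(v, u)
  · rw [hz, update_self]
    simp
  · rw [update_of_ne hz]
    exact fun h' => hz (by rw [hc.eq_of_apply_eq_some h' h])

theorem exists_missing [Finite V] {G : SimpleGraph V} (hcG : ∀ e, (c e).isSome → e ∈ G.edgeSet)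
    (v : V) (hv : (G.neighborSet v).ncard < k) : ∃ γ, Missing c v γ := by
  by_contra! h
  simp only [Missing, not_forall, not_not] at h
  choose z hz using h
  have hinj : Injective z := fun γ₁ γ₂ h => Option.some_injective _ <| by
    rw [← hz γ₁, ← hz γ₂, h]
  have hsub : Set.range z ⊆ G.neighborSet v := by
    rintro _ ⟨γ, rfl⟩
    exact hcG s(v, z γ) (by simp [hz γ])
  have := Set.ncard_le_ncard hsub (Set.toFinite _)
  rw [← Set.image_univ, hinj.injOn.ncard_image, Set.ncard_univ, Nat.card_eq_fintype_card,
    Fintype.card_fin] at this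
  omega

theorem edgeColorable_of_missing_common {G : SimpleGraph V} {x u : V} (hxu : G.Adj x u)
    (hdom : ∀ e, (c e).isSome ↔ e ∈ G.edgeSet \ {s(x, u)}) (hc : Proper c) {γ : Fin k}
    (hx : Missing c x γ) (hu : Missing c u γ) : EdgeColorable G k := by
  refine ⟨update c s(x, u) (some γ), fun e => ?_, hc.update_some hx hu⟩
  by_cases he : e = s(x, u)
  · simpa [he] using hxu
  · simp [hdom e, he]

def twoColorGraph (c : Sym2 V → Option (Fin k)) (α β : Fin k) : SimpleGraph V where
  Adj u v := u ≠ v ∧ (c s(u, v) = some α ∨ c s(u, v) = some β)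
  symm := ⟨fun _ _ h => ⟨h.1.symm, by rw [Sym2.eq_swap]; exact h.2⟩⟩
  loopless := ⟨fun _ h => h.1 rfl⟩

theorem twoColorGraph_comm (c : Sym2 V → Option (Fin k)) (α β : Fin k) :
    twoColorGraph c α β = twoColorGraph c β α := by
  ext u v
  simp only [twoColorGraph, or_comm]

theorem Proper.ncard_le_one [Finite V] (hc : Proper c) (v : V) (γ : Fin k) :
    {z | c s(v, z) = some γ}.ncard ≤ 1 :=
  (Set.ncard_le_one (Set.toFinite _)).2 fun _ h₁ _ h₂ => hc.eq_of_apply_eq_some h₁ h₂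

theorem Proper.ncard_neighborSet_twoColorGraph_le_two [Finite V] (hc : Proper c) (α β : Fin k)
    (v : V) : ((twoColorGraph c α β).neighborSet v).ncard ≤ 2 := by
  have hsub : (twoColorGraph c α β).neighborSet v ⊆
      {z | c s(v, z) = some α} ∪ {z | c s(v, z) = some β} := fun z hz => hz.2
  calc _ ≤ _ := Set.ncard_le_ncard hsub (Set.toFinite _)
    _ ≤ _ := Set.ncard_union_le _ _
    _ ≤ 1 + 1 := add_le_add (hc.ncard_le_one v α) (hc.ncard_le_one v β)

theorem Proper.ncard_neighborSet_twoColorGraph_le_one [Finite V] (hc : Proper c) (α : Fin k)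
    {v : V} {β : Fin k} (hv : Missing c v β) :
    ((twoColorGraph c α β).neighborSet v).ncard ≤ 1 := by
  have hsub : (twoColorGraph c α β).neighborSet v ⊆ {z | c s(v, z) = some α} :=
    fun z hz => hz.2.resolve_right (hv z)
  exact (Set.ncard_le_ncard hsub (Set.toFinite _)).trans (hc.ncard_le_one v α)

theorem reachable_of_mem_of_apply_eq {α β γ : Fin k} {x v w : V} {e : Sym2 V}
    (he : c e = some γ) (hγ : γ = α ∨ γ = β) (hv : v ∈ e) (hw : w ∈ e)
    (h : (twoColorGraph c α β).Reachable x v) : (twoColorGraph c α β).Reachable x w := by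
  by_cases hvw : v = w
  · exact hvw ▸ h
  · obtain rfl := (Sym2.mem_and_mem_iff hvw).1 ⟨hv, hw⟩
    exact h.trans (Adj.reachable ⟨hvw, by rcases hγ with rfl | rfl <;> simp [he]⟩)

noncomputable def kempeSwap (c : Sym2 V → Option (Fin k)) (α β : Fin k) (x : V) :
    Sym2 V → Option (Fin k) := fun e =>
  if ∃ v ∈ e, (twoColorGraph c α β).Reachable x v then (c e).map (Equiv.swap α β) else c e

variable {α β : Fin k} {x : V}

theorem isSome_kempeSwap (e : Sym2 V) : (kempeSwap c α β x e).isSome = (c e).isSome := by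
  unfold kempeSwap
  split_ifs <;> simp

theorem kempeSwap_apply_of_not_reachable {v : V} (hv : ¬ (twoColorGraph c α β).Reachable x v)
    (z : V) : kempeSwap c α β x s(v, z) = c s(v, z) := by
  unfold kempeSwap
  split_ifs with h
  · obtain ⟨w, hw, hxw⟩ := h
    cases hvz : c s(v, z) with
    | none => rfl
    | some γ =>
      obtain ⟨hγα, hγβ⟩ := not_or.1 fun hγ =>
        hv (reachable_of_mem_of_apply_eq hvz hγ hw (Sym2.mem_mk_left v z) hxw)
      simp [Equiv.swap_apply_of_ne_of_ne hγα hγβ]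
  · rfl

theorem Missing.kempeSwap_of_not_reachable {v : V} {γ : Fin k} (h : Missing c v γ)
    (hv : ¬ (twoColorGraph c α β).Reachable x v) : Missing (kempeSwap c α β x) v γ := by
  intro z
  rw [kempeSwap_apply_of_not_reachable hv z]
  exact h z

theorem Missing.kempeSwap_self (h : Missing c x α) : Missing (kempeSwap c α β x) x β := by
  intro z
  have hx : ∃ v ∈ s(x, z), (twoColorGraph c α β).Reachable x v :=
    ⟨x, Sym2.mem_mk_left x z, .refl x⟩
  simp only [kempeSwap, if_pos hx]
  cases hz : c s(x, z) with
  | none => simp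
  | some γ =>
    simp only [Option.map_some, ne_eq, Option.some.injEq, Equiv.swap_apply_eq_iff,
      Equiv.swap_apply_right]
    rintro rfl
    exact h z hz

/-- An `α`/`β`-edge `e` on the chain would put the common vertex `a`, hence `f`, on the chain;
edges of other colours keep their colour. -/
theorem Proper.map_swap_ne (hc : Proper c) {a : V} {e f : Sym2 V} (hae : a ∈ e) (haf : a ∈ f)
    (hef : e ≠ f) (he : (c e).isSome) (hre : ∃ v ∈ e, (twoColorGraph c α β).Reachable x v)
    (hrf : ¬ ∃ v ∈ f, (twoColorGraph c α β).Reachable x v) :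
    (c e).map (Equiv.swap α β) ≠ c f := by
  obtain ⟨γ, hγ⟩ := Option.isSome_iff_exists.1 he
  by_cases hγαβ : γ = α ∨ γ = β
  · obtain ⟨v, hv, hxv⟩ := hre
    exact absurd ⟨a, haf, reachable_of_mem_of_apply_eq hγ hγαβ hv hae hxv⟩ hrf
  · obtain ⟨hγα, hγβ⟩ := not_or.1 hγαβ
    rw [hγ, Option.map_some, Equiv.swap_apply_of_ne_of_ne hγα hγβ, ← hγ]
    exact hc hae haf hef he

theorem Proper.kempeSwap (hc : Proper c) : Proper (kempeSwap c α β x) := by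
  intro a e f hae haf hef hs
  rw [isSome_kempeSwap] at hs
  unfold Vizing.kempeSwap
  split_ifs with he hf hf
  · exact (Option.map_injective (Equiv.injective _)).ne (hc hae haf hef hs)
  · exact hc.map_swap_ne hae haf hef hs he hf
  · cases hcf : c f with
    | none => simpa [Option.isSome_iff_ne_none] using hs
    | some γ =>
      rw [← hcf]
      exact (hc.map_swap_ne haf hae (Ne.symm hef) (by simp [hcf]) hf he).symm
  · exact hc hae haf hef hs

theorem edgeColorable_of_kempe {G : SimpleGraph V} {u : V} (hxu : G.Adj x u)
    (hdom : ∀ e, (c e).isSome ↔ e ∈ G.edgeSet \ {s(x, u)}) (hc : Proper c)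
    (hx : Missing c x α) (hu : Missing c u β) (hxu' : ¬ (twoColorGraph c α β).Reachable x u) :
    EdgeColorable G k :=
  edgeColorable_of_missing_common hxu (fun e => by rw [isSome_kempeSwap, hdom]) hc.kempeSwap
    hx.kempeSwap_self (hu.kempeSwap_of_not_reachable hxu')

variable {G : SimpleGraph V} {m : V → Fin k} {y : V} {f : ℕ → V} {n : ℕ}

/-- Vizing's fan at `x` around the uncoloured edge `x y`; `m v` is a colour missing at `v`. -/
structure IsFan (G : SimpleGraph V) (c : Sym2 V → Option (Fin k)) (m : V → Fin k) (x y : V)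
    (f : ℕ → V) (n : ℕ) : Prop where
  start : f 0 = y
  adj : ∀ l ≤ n, G.Adj x (f l)
  injOn : Set.InjOn f (Set.Iic n)
  apply_succ : ∀ l < n, c s(x, f (l + 1)) = some (m (f l))

noncomputable def rotate (c : Sym2 V → Option (Fin k)) (m : V → Fin k) (x : V) (f : ℕ → V) :
    ℕ → Sym2 V → Option (Fin k)
  | 0 => c
  | i + 1 => update (update (rotate c m x f i) s(x, f (i + 1)) none) s(x, f i) (some (m (f i)))

theorem rotate_apply_of_forall_ne {i : ℕ} {e : Sym2 V} (he : ∀ l ≤ i, e ≠ s(x, f l)) :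
    rotate c m x f i e = c e := by
  induction i with
  | zero => rfl
  | succ i ih =>
    rw [rotate, update_of_ne (he i (by omega)), update_of_ne (he (i + 1) le_rfl),
      ih fun l hl => he l (by omega)]

theorem rotate_apply_of_not_mem {i : ℕ} {e : Sym2 V} (hx : x ∉ e) : rotate c m x f i e = c e :=
  rotate_apply_of_forall_ne fun l _ h => hx (h ▸ Sym2.mem_mk_left x (f l))

namespace IsFan

theorem ne_center (hF : IsFan G c m x y f n) {l : ℕ} (hl : l ≤ n) : f l ≠ x :=
  (hF.adj l hl).ne'

theorem eq_of_edge_eq (hF : IsFan G c m x y f n) {l l' : ℕ} (hl : l ≤ n) (hl' : l' ≤ n)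
    (h : s(x, f l) = s(x, f l')) : l = l' :=
  hF.injOn hl hl' (Sym2.congr_right.1 h)

theorem rotate_apply_lt (hF : IsFan G c m x y f n) {i l : ℕ} (hi : i ≤ n) (hl : l < i) :
    rotate c m x f i s(x, f l) = some (m (f l)) := by
  induction i with
  | zero => omega
  | succ i ih =>
    rw [rotate]
    obtain rfl | hl := (Nat.lt_succ_iff_lt_or_eq.1 hl).symm
    · rw [update_self]
    · have h₁ : s(x, f l) ≠ s(x, f i) := fun h => by
        have := hF.eq_of_edge_eq (by omega) (by omega) h; omega
      have h₂ : s(x, f l) ≠ s(x, f (i + 1)) := fun h => by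
        have := hF.eq_of_edge_eq (by omega) hi h; omega
      rw [update_of_ne h₁, update_of_ne h₂, ih (by omega) hl]

theorem rotate_apply_of_lt (hF : IsFan G c m x y f n) {i l : ℕ} (hl : l ≤ n) (hil : i < l) :
    rotate c m x f i s(x, f l) = c s(x, f l) :=
  rotate_apply_of_forall_ne fun l' hl' h => by have := hF.eq_of_edge_eq hl (by omega) h; omega

theorem isSome_rotate_iff (hF : IsFan G c m x y f n)
    (hdom : ∀ e, (c e).isSome ↔ e ∈ G.edgeSet \ {s(x, y)}) {i : ℕ} (hi : i ≤ n) (e : Sym2 V) :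
    (rotate c m x f i e).isSome ↔ e ∈ G.edgeSet \ {s(x, f i)} := by
  induction i generalizing e with
  | zero => rw [hF.start]; exact hdom e
  | succ i ih =>
    have hne : s(x, f i) ≠ s(x, f (i + 1)) := fun h => by
      have := hF.eq_of_edge_eq (by omega) hi h; omega
    rw [rotate]
    by_cases h₁ : e = s(x, f i)
    · subst h₁
      simpa [hne] using hF.adj i (by omega)
    by_cases h₂ : e = s(x, f (i + 1))
    · subst h₂
      simp [Ne.symm hne]
    rw [update_of_ne h₁, update_of_ne h₂, ih (by omega)]
    simp [h₁, h₂]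

theorem rotate_apply_self (hF : IsFan G c m x y f n)
    (hdom : ∀ e, (c e).isSome ↔ e ∈ G.edgeSet \ {s(x, y)}) {i : ℕ} (hi : i ≤ n) :
    rotate c m x f i s(x, f i) = none :=
  Option.not_isSome_iff_eq_none.1 fun h => ((hF.isSome_rotate_iff hdom hi _).1 h).2 rfl

theorem missing_rotate (hF : IsFan G c m x y f n)
    (hdom : ∀ e, (c e).isSome ↔ e ∈ G.edgeSet \ {s(x, y)}) (hm : ∀ v, Missing c v (m v))
    {i : ℕ} (hi : i ≤ n) : Missing (rotate c m x f i) (f i) (m (f i)) := by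
  intro z
  by_cases hz : z = x
  · subst hz
    simp [Sym2.eq_swap, hF.rotate_apply_self hdom hi]
  · rw [rotate_apply_of_not_mem (by simp [Ne.symm hz, (hF.ne_center hi).symm])]
    exact hm (f i) z

theorem missing_rotate_of_missing (hF : IsFan G c m x y f n) {γ : Fin k} (h : Missing c x γ)
    {i : ℕ} (hi : i ≤ n) : Missing (rotate c m x f i) x γ := by
  induction i with
  | zero => exact h
  | succ i ih =>
    refine ((ih (by omega)).update _ (by simp)).update _ ?_
    rw [← hF.apply_succ i (by omega)]
    exact h _

theorem proper_rotate (hF : IsFan G c m x y f n)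
    (hdom : ∀ e, (c e).isSome ↔ e ∈ G.edgeSet \ {s(x, y)}) (hc : Proper c)
    (hm : ∀ v, Missing c v (m v)) {i : ℕ} (hi : i ≤ n) : Proper (rotate c m x f i) := by
  induction i with
  | zero => exact hc
  | succ i ih =>
    have hci := ih (by omega)
    have hsucc : rotate c m x f i s(x, f (i + 1)) = some (m (f i)) := by
      rw [hF.rotate_apply_of_lt hi (by omega), hF.apply_succ i (by omega)]
    exact (hci.update_none _).update_some (hci.missing_update_none hsucc)
      ((hF.missing_rotate hdom hm (by omega)).update _ (by simp))

theorem succ_le_card [Finite V] (hF : IsFan G c m x y f n) : n + 1 ≤ Nat.card V :=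
  calc n + 1 = (Set.Iic n).ncard := by simp [Set.ncard_eq_toFinset_card']
    _ = (f '' Set.Iic n).ncard := hF.injOn.ncard_image.symm
    _ ≤ Nat.card V := Set.ncard_le_card _

theorem snoc (hF : IsFan G c m x y f n) {z : V} (hz : G.Adj x z)
    (hcz : c s(x, z) = some (m (f n))) (hnew : ∀ l ≤ n, f l ≠ z) :
    IsFan G c m x y (update f (n + 1) z) (n + 1) := by
  have hold : ∀ l ≤ n, update f (n + 1) z l = f l := fun l hl => update_of_ne (by omega) _ _
  refine ⟨by rw [hold 0 (by omega), hF.start], fun l hl => ?_, fun a ha b hb hab => ?_,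
    fun l hl => ?_⟩
  · obtain rfl | hl := eq_or_lt_of_le hl
    · rwa [update_self]
    · rw [hold l (by omega)]
      exact hF.adj l (by omega)
  · simp only [Set.mem_Iic] at ha hb
    obtain rfl | ha := eq_or_lt_of_le ha <;> obtain rfl | hb := eq_or_lt_of_le hb
    · rfl
    · rw [update_self, hold b (by omega)] at hab
      exact absurd hab.symm (hnew b (by omega))
    · rw [update_self, hold a (by omega)] at hab
      exact absurd hab (hnew a (by omega))
    · rw [hold a (by omega), hold b (by omega)] at hab
      exact hF.injOn (Set.mem_Iic.2 (by omega)) (Set.mem_Iic.2 (by omega)) hab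
  · rw [hold l (by omega)]
    obtain rfl | hl := eq_or_lt_of_le (Nat.lt_succ_iff.1 hl)
    · rwa [update_self]
    · rw [hold (l + 1) (by omega)]
      exact hF.apply_succ l hl

end IsFan

theorem exists_maximal_fan [Finite V] (hxy : G.Adj x y) :
    ∃ f n, IsFan G c m x y f n ∧
      ∀ z, G.Adj x z → c s(x, z) = some (m (f n)) → ∃ l ≤ n, f l = z := by
  have hbdd : BddAbove {n | ∃ f, IsFan G c m x y f n} :=
    ⟨Nat.card V, by rintro n ⟨_, hF⟩; have := hF.succ_le_card; omega⟩
  have h₀ : IsFan G c m x y (fun _ => y) 0 :=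
    ⟨rfl, fun _ _ => hxy, fun a ha b hb _ => by simp_all, fun l hl => absurd hl l.not_lt_zero⟩
  obtain ⟨f, hF⟩ := Nat.sSup_mem (s := {n | ∃ f, IsFan G c m x y f n}) ⟨0, _, h₀⟩ hbdd
  refine ⟨f, _, hF, fun z hz hcz => ?_⟩
  by_contra! hnew
  have := le_csSup hbdd ⟨_, hF.snoc hz hcz hnew⟩
  omega

theorem IsFan.missing_or_exists_eq_of_maximal (hF : IsFan G c m x y f n)
    (hdom : ∀ e, (c e).isSome ↔ e ∈ G.edgeSet \ {s(x, y)}) (hm : ∀ v, Missing c v (m v))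
    (hmax : ∀ z, G.Adj x z → c s(x, z) = some (m (f n)) → ∃ l ≤ n, f l = z) :
    Missing c x (m (f n)) ∨ ∃ i, i + 1 < n ∧ m (f i) = m (f n) := by
  by_contra! h
  obtain ⟨hA, hB⟩ := h
  simp only [Missing, not_forall, not_not] at hA
  obtain ⟨z, hz⟩ := hA
  obtain ⟨j, hj, rfl⟩ := hmax z ((hdom s(x, z)).1 (by simp [hz])).1 hz
  cases j with
  | zero =>
    rw [hF.start] at hz
    simpa [hz] using hdom s(x, y)
  | succ i =>
    have hin : i + 1 ≠ n := by
      rintro rfl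
      exact hm (f (i + 1)) x (by rwa [Sym2.eq_swap])
    exact hB i (by omega) (Option.some_injective _ ((hF.apply_succ i (by omega)).symm.trans hz))

/-- The `α`/`β`-chain from `x` in the rotation up to `i` starts with the edge `x (f (i + 1))`
of colour `β`. If it reaches `f i`, then after the full rotation the edge `x (f i)` has colour
`β` instead, so the chain from `x` ends at `f (i + 1)` and misses the endpoint `f n`. -/
theorem IsFan.edgeColorable_of_reachable [Finite V] (hF : IsFan G c m x y f n)
    (hdom : ∀ e, (c e).isSome ↔ e ∈ G.edgeSet \ {s(x, y)}) (hc : Proper c)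
    (hm : ∀ v, Missing c v (m v)) {α : Fin k} (hα : Missing c x α) {i : ℕ} (hi : i + 1 < n)
    (hβ : m (f i) = m (f n))
    (hr : (twoColorGraph (rotate c m x f i) α (m (f i))).Reachable x (f i)) :
    EdgeColorable G k := by
  set β := m (f i)
  set H₂ := twoColorGraph (rotate c m x f n) α β
  have hc₂ := hF.proper_rotate hdom hc hm le_rfl
  have hx₁ : ∀ z, (twoColorGraph (rotate c m x f i) α β).Adj x z → z = f (i + 1) := by
    rintro z ⟨-, h | h⟩
    · exact absurd h (hF.missing_rotate_of_missing hα (by omega) z)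
    · refine (hF.proper_rotate hdom hc hm (by omega)).eq_of_apply_eq_some h ?_
      rw [hF.rotate_apply_of_lt hi.le (by omega), hF.apply_succ i (by omega)]
  have hoff : ∀ u w, (twoColorGraph (rotate c m x f i) α β).Adj u w → u ≠ x → w ≠ x →
      H₂.Adj u w := by
    rintro u w ⟨huw, h⟩ hu hw
    have hx : x ∉ s(u, w) := by simp [Ne.symm hu, Ne.symm hw]
    exact ⟨huw, by rwa [rotate_apply_of_not_mem hx] at h ⊢⟩
  have hreach : H₂.Reachable x (f (i + 1)) := by
    obtain h | h := hr.eq_or_reachable_of_unique_adj hx₁ hoff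
    · exact absurd h (hF.ne_center (by omega))
    · have hadj : H₂.Adj x (f i) :=
        ⟨(hF.ne_center (by omega)).symm, Or.inr (hF.rotate_apply_lt le_rfl (by omega))⟩
      exact hadj.reachable.trans h.symm
  have hmiss : Missing (rotate c m x f n) (f (i + 1)) β := by
    intro z hz
    by_cases hzx : z = x
    · subst hzx
      rw [Sym2.eq_swap, hF.rotate_apply_lt le_rfl hi, Option.some_inj] at hz
      have := hc.eq_of_apply_eq_some ((hF.apply_succ (i + 1) hi).trans (congrArg some hz))
        (hF.apply_succ i (by omega))
      have := hF.injOn (Set.mem_Iic.2 (by omega)) (Set.mem_Iic.2 (by omega)) this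
      omega
    · have hx : x ∉ s(f (i + 1), z) := by
        simp [Ne.symm hzx, (hF.ne_center (l := i + 1) (by omega)).symm]
      rw [rotate_apply_of_not_mem hx] at hz
      exact hzx (hc.eq_of_apply_eq_some hz (by rw [Sym2.eq_swap]; exact hF.apply_succ i (by omega)))
  have hβn : Missing (rotate c m x f n) (f n) β := hβ ▸ hF.missing_rotate hdom hm le_rfl
  have hαx := hF.missing_rotate_of_missing hα le_rfl
  have hnr : ¬ H₂.Reachable x (f n) := by
    refine hreach.not_reachable_of_ncard_neighborSet_le
      (hc₂.ncard_neighborSet_twoColorGraph_le_two α β) (hF.ne_center (by omega)).symm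
      (hF.ne_center le_rfl).symm (fun h => ?_) ?_
      (hc₂.ncard_neighborSet_twoColorGraph_le_one α hmiss)
      (hc₂.ncard_neighborSet_twoColorGraph_le_one α hβn)
    · have := hF.injOn (Set.mem_Iic.2 (by omega)) (Set.mem_Iic.2 le_rfl) h
      omega
    · rw [twoColorGraph_comm]
      exact hc₂.ncard_neighborSet_twoColorGraph_le_one β hαx
  exact edgeColorable_of_kempe (hF.adj n le_rfl) (hF.isSome_rotate_iff hdom le_rfl) hc₂ hαx hβn hnr

theorem edgeColorable_of_edgeColorable_deleteEdges [Finite V] {Δ : ℕ}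
    (hdeg : ∀ v, (G.neighborSet v).ncard ≤ Δ) (hxy : G.Adj x y)
    (h : EdgeColorable (G.deleteEdges {s(x, y)}) (Δ + 1)) : EdgeColorable G (Δ + 1) := by
  obtain ⟨c, hdom, hc⟩ := h
  simp only [edgeSet_deleteEdges] at hdom
  have hcG : ∀ e, (c e).isSome → e ∈ G.edgeSet := fun e he => ((hdom e).1 he).1
  choose m hm using fun v => exists_missing hcG v (Nat.lt_succ_of_le (hdeg v))
  obtain ⟨f, n, hF, hmax⟩ := exists_maximal_fan (c := c) (m := m) hxy
  obtain hA | ⟨i, hi, hβ⟩ := hF.missing_or_exists_eq_of_maximal hdom hm hmax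
  · exact edgeColorable_of_missing_common (hF.adj n le_rfl) (hF.isSome_rotate_iff hdom le_rfl)
      (hF.proper_rotate hdom hc hm le_rfl) (hF.missing_rotate_of_missing hA le_rfl)
      (hF.missing_rotate hdom hm le_rfl)
  by_cases hr : (twoColorGraph (rotate c m x f i) (m x) (m (f i))).Reachable x (f i)
  · exact hF.edgeColorable_of_reachable hdom hc hm (hm x) hi hβ hr
  · exact edgeColorable_of_kempe (hF.adj i (by omega)) (hF.isSome_rotate_iff hdom (by omega))
      (hF.proper_rotate hdom hc hm (by omega)) (hF.missing_rotate_of_missing (hm x) (by omega))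
      (hF.missing_rotate hdom hm (by omega)) hr

theorem edgeColorable_of_ncard_neighborSet_le [Finite V] {Δ : ℕ} (G : SimpleGraph V)
    (hdeg : ∀ v, (G.neighborSet v).ncard ≤ Δ) : EdgeColorable G (Δ + 1) := by
  obtain ⟨N, hN⟩ : ∃ N, G.edgeSet.ncard = N := ⟨_, rfl⟩
  induction N using Nat.strong_induction_on generalizing G with
  | _ N ih =>
  obtain hE | ⟨e, he⟩ := G.edgeSet.eq_empty_or_nonempty
  · exact ⟨fun _ => none, by simp [hE], fun _ _ _ _ _ _ h => by simp at h⟩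
  induction e using Sym2.ind with
  | _ x y =>
  have hdeg' : ∀ v, ((G.deleteEdges {s(x, y)}).neighborSet v).ncard ≤ Δ := fun v =>
    (Set.ncard_le_ncard (fun _ h => deleteEdges_le _ h) (Set.toFinite _)).trans (hdeg v)
  have hcard : (G.deleteEdges {s(x, y)}).edgeSet.ncard < N := by
    rw [edgeSet_deleteEdges, ← hN]
    exact Set.ncard_sdiff_singleton_lt_of_mem he (Set.toFinite _)
  exact edgeColorable_of_edgeColorable_deleteEdges hdeg he (ih _ hcard _ hdeg' rfl)

end Vizing

section StrongEdgeColoring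

variable {V : Type} {G : SimpleGraph V}

theorem IsStrongEdgeColoring.comp {α β : Type} {c : Sym2 V → α} (hc : IsStrongEdgeColoring G c)
    {g : α → β} (hg : Injective g) : IsStrongEdgeColoring G (g ∘ c) := fun _ =>
  ⟨fun _ he => he.1, fun e he f hf =>
    (hc (c e)).2 e ⟨he.1, rfl⟩ f ⟨hf.1, hg (hf.2.trans he.2.symm)⟩⟩

theorem strongChromaticIndex_le_card {α : Type} [Fintype α] {c : Sym2 V → α}
    (hc : IsStrongEdgeColoring G c) : strongChromaticIndex G ≤ Fintype.card α :=
  Nat.sInf_le ⟨_, hc.comp (Fintype.equivFin α).injective⟩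

theorem edgeNear_comm {e f : Sym2 V} : edgeNear G e f ↔ edgeNear G f e := by
  constructor <;>
  · rintro ⟨a, ha, b, hb, h⟩
    exact ⟨b, hb, a, ha, h.imp Eq.symm Adj.symm⟩

def edgeNearGraph (G : SimpleGraph V) (M : Set (Sym2 V)) : SimpleGraph M where
  Adj e f := e ≠ f ∧ edgeNear G e f
  symm := ⟨fun _ _ h => ⟨h.1.symm, edgeNear_comm.1 h.2⟩⟩
  loopless := ⟨fun _ h => h.1 rfl⟩

theorem induce_connected_of_mem_edgeSet {e : Sym2 V} (he : e ∈ G.edgeSet) :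
    (G.induce (e : Set V)).Connected := by
  induction e using Sym2.ind with
  | _ a b =>
    rw [Sym2.coe_mk]
    exact induce_pair_connected_of_adj he

/-- The branch sets are the edges of the matching. -/
theorem IsMatchingSet.isMinor_edgeNearGraph {M : Set (Sym2 V)} (hM : IsMatchingSet G M) :
    IsMinor (edgeNearGraph G M) G := by
  refine ⟨fun e => (e : Sym2 V), fun e => ⟨_, Sym2.out_fst_mem (e : Sym2 V)⟩, fun e f hef => ?_,
    fun e => induce_connected_of_mem_edgeSet (hM.1 e.2), ?_⟩
  · exact Set.disjoint_left.2 fun a hae haf =>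
      hM.2 e e.2 f f.2 (fun h => hef (Subtype.ext h)) a hae haf
  · rintro e f ⟨hef, a, ha, b, hb, rfl | h⟩
    · exact absurd hb (hM.2 e e.2 f f.2 (fun h => hef (Subtype.ext h)) a ha)
    · exact ⟨a, ha, b, hb, h⟩

theorem strongChromaticIndex_le_of_isMatchingSet {ι : Type} [Fintype ι] [Nonempty ι] {b : ℕ}
    (hb : 0 < b) (M : ι → Set (Sym2 V)) (hM : ∀ i, IsMatchingSet G (M i))
    (hcover : G.edgeSet ⊆ ⋃ i, M i) (hcol : ∀ i, (edgeNearGraph G (M i)).Colorable b) :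
    strongChromaticIndex G ≤ b * Fintype.card ι := by
  classical
  choose! idx hidx using fun e (he : e ∈ G.edgeSet) => Set.mem_iUnion.1 (hcover he)
  let g : ι → Sym2 V → Fin b := fun i e =>
    if h : e ∈ M i then (hcol i).some ⟨e, h⟩ else ⟨0, hb⟩
  have hg : ∀ i e f (he : e ∈ M i) (hf : f ∈ M i), (edgeNearGraph G (M i)).Adj ⟨e, he⟩ ⟨f, hf⟩ →
      g i e ≠ g i f := fun i e f he hf hadj => by
    simpa [g, he, hf] using (hcol i).some.valid hadj
  have hc : IsStrongEdgeColoring G fun e => (g (idx e) e, idx e) := by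
    refine fun _ => ⟨fun _ he => he.1, fun e ⟨he, hek⟩ f ⟨hf, hfk⟩ hef a ha b' hb' => ?_⟩
    have hcol := hek.trans hfk.symm
    simp only [Prod.mk.injEq] at hcol
    obtain ⟨hgef, hidx'⟩ := hcol
    have heM := hidx e he
    have hfM : f ∈ M (idx e) := hidx' ▸ hidx f hf
    rw [← hidx'] at hgef
    refine ⟨fun hab => hM (idx e) |>.2 e heM f hfM hef a ha (hab ▸ hb'), fun hab => ?_⟩
    exact hg _ e f heM hfM ⟨fun h => hef (congrArg Subtype.val h), a, ha, b', hb', Or.inr hab⟩ hgef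
  simpa using strongChromaticIndex_le_card hc

end StrongEdgeColoring

theorem stmt4_general (𝒢 : ∀ V : Type, SimpleGraph V → Prop)
    (hclosed : ∀ (V W : Type) (G : SimpleGraph V) (H : SimpleGraph W),
      𝒢 V G → IsMinor H G → 𝒢 W H)
    (r : ℕ)
    (hr : ∀ (V : Type) (G : SimpleGraph V), 𝒢 V G → G.chromaticNumber ≤ (r : ℕ∞))
    {V : Type} [Fintype V] (G : SimpleGraph V) (hG : 𝒢 V G) (Δ : ℕ)
    (hΔ : ∀ v, (G.neighborSet v).ncard ≤ Δ) :
    strongChromaticIndex G ≤ r * (Δ + 1) := by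
  obtain rfl | hr₀ := Nat.eq_zero_or_pos r
  · have : IsEmpty V := colorable_zero_iff.1 (chromaticNumber_le_iff_colorable.1 (hr V G hG))
    simpa using strongChromaticIndex_le_card (G := G) (α := Fin 0) (c := isEmptyElim) (·.elim0)
  obtain ⟨c, hcG, hc⟩ := Vizing.edgeColorable_of_ncard_neighborSet_le G hΔ
  have hM := hc.isMatchingSet fun e => (hcG e).1
  have hcover : G.edgeSet ⊆ ⋃ i, {e | c e = some i} := fun e he =>
    Set.mem_iUnion.2 (Option.isSome_iff_exists.1 ((hcG e).2 he))
  simpa using strongChromaticIndex_le_of_isMatchingSet hr₀ _ hM hcover fun i =>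
    chromaticNumber_le_iff_colorable.1 (hr _ _ (hclosed _ _ _ _ hG (hM i).isMinor_edgeNearGraph))

theorem stmt4 (𝒢 : ∀ V : Type, SimpleGraph V → Prop)
    (hclosed : ∀ (V W : Type) (G : SimpleGraph V) (H : SimpleGraph W),
      𝒢 V G → IsMinor H G → 𝒢 W H)
    (hproper : ∃ (V : Type) (_ : Fintype V) (G : SimpleGraph V), ¬ 𝒢 V G)
    (r : ℕ)
    (hr : ∀ (V : Type) (G : SimpleGraph V), 𝒢 V G → G.chromaticNumber ≤ (r : ℕ∞))
    {V : Type} [Fintype V] (G : SimpleGraph V) (hG : 𝒢 V G) (Δ : ℕ)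
    (hΔ : ∀ v, (G.neighborSet v).ncard ≤ Δ) :
    strongChromaticIndex G ≤ r * (Δ + 1) :=
  stmt4_general 𝒢 hclosed r hr G hG Δ hΔ
end

section
/- Every graph G of treewidth at most k and maximum degree Δ has strong chromatic index at most (k+1)(Δ+1). -/
/-!
Colour the square of the line graph `L(G)²`. Putting each edge into every bag that contains one of
its ends turns a tree decomposition of `G` of width `k` into one of `L(G)²` whose bags hold at most
`(k + 1) Δ` edges. A graph with a tree decomposition of width `w` is `w`-degenerate: root the tree
anywhere and take the vertex whose subtree of bags starts deepest; that top bag contains all its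
neighbours. Greedy colouring then needs only `(k + 1) Δ` colours.
-/

namespace SimpleGraph

variable {ι : Type*} {T : SimpleGraph ι}

theorem Walk.dist_lt_of_length_eq_dist {r t u : ι} (g : T.Walk r t)
    (hg : g.length = T.dist r t) (hu : u ∈ g.support) (hut : u ≠ t) :
    T.dist r u < T.dist r t := by
  classical
  have hdrop : 0 < (g.dropUntil u hu).length := by
    by_contra h
    exact hut ((g.dropUntil u hu).eq_of_length_eq_zero (by omega))
  calc T.dist r u ≤ (g.takeUntil u hu).length := dist_le _
    _ < (g.takeUntil u hu).length + (g.dropUntil u hu).length := by omega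
    _ = T.dist r t := by rw [← Walk.length_append, Walk.take_spec, hg]

theorem exists_isPath_support_subset_of_connected_induce {A : Set ι}
    (hA : (T.induce A).Connected) {a b : ι} (ha : a ∈ A) (hb : b ∈ A) :
    ∃ q : T.Walk a b, q.IsPath ∧ ∀ u ∈ q.support, u ∈ A := by
  classical
  obtain ⟨q⟩ := hA.preconnected ⟨a, ha⟩ ⟨b, hb⟩
  let q' := q.map (Embedding.induce A).toHom
  refine ⟨q'.bypass, q'.bypass_isPath, fun u hu => ?_⟩
  have hu' := q'.support_bypass_subset_support hu
  rw [Walk.support_map] at hu'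
  obtain ⟨⟨u, huA⟩, -, rfl⟩ := List.mem_map.mp hu'
  exact huA

theorem IsAcyclic.eq_append_of_isPath_of_closest (ha : T.IsAcyclic) (hc : T.Connected)
    {A : Set ι} (hA : (T.induce A).Connected) {r t j : ι} (ht : t ∈ A)
    (hmin : ∀ a ∈ A, T.dist r t ≤ T.dist r a) (hj : j ∈ A) {p : T.Walk r j} (hp : p.IsPath) :
    ∃ (g : T.Walk r t) (q : T.Walk t j),
      g.length = T.dist r t ∧ (∀ u ∈ q.support, u ∈ A) ∧ p = g.append q := by
  obtain ⟨g, hg⟩ := hc.exists_walk_length_eq_dist r t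
  obtain ⟨q, hq, hqA⟩ := exists_isPath_support_subset_of_connected_induce hA ht hj
  refine ⟨g, q, hg, hqA, ?_⟩
  have ht_tail : t ∉ q.support.tail := by
    have := hq.support_nodup
    rw [← Walk.cons_tail_support] at this
    exact (List.nodup_cons.mp this).1
  have hgq : (g.append q).IsPath := by
    rw [Walk.isPath_def, Walk.support_append, List.nodup_append]
    refine ⟨(g.isPath_of_length_eq_dist hg).support_nodup,
      hq.support_nodup.sublist (List.tail_sublist _), ?_⟩
    rintro u hug u' huq rfl
    have hut : u ≠ t := by rintro rfl; exact ht_tail huq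
    exact (hmin u (hqA u (List.mem_of_mem_tail huq))).not_gt
      (g.dist_lt_of_length_eq_dist hg hug hut)
  exact congrArg Subtype.val ((ha.subsingleton_path r j).elim ⟨p, hp⟩ ⟨_, hgq⟩)

theorem IsTree.exists_mem_forall_mem_of_inter_nonempty {X : Type*} (hT : T.IsTree)
    (A : X → Set ι) {S : Set X} (hSf : S.Finite) (hS : S.Nonempty)
    (hA : ∀ x ∈ S, (T.induce (A x)).Connected) :
    ∃ x ∈ S, ∃ i ∈ A x, ∀ y ∈ S, (A x ∩ A y).Nonempty → i ∈ A y := by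
  obtain ⟨r⟩ := hT.connected.nonempty
  have : Nonempty ι := ⟨r⟩
  have hclosest : ∀ x ∈ S, ∃ t ∈ A x, ∀ a ∈ A x, T.dist r t ≤ T.dist r a := by
    intro x hx
    obtain ⟨⟨a, ha⟩⟩ := (hA x hx).nonempty
    exact ⟨_, Function.argminOn_mem _ _ ⟨a, ha⟩, fun b hb => Function.argminOn_le _ _ hb⟩
  choose! top htop htop_min using hclosest
  -- the subtree whose closest node to `r` is farthest from `r`
  obtain ⟨x, hx, hx_max⟩ := Set.exists_max_image S (fun x => T.dist r (top x)) hSf hS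
  refine ⟨x, hx, top x, htop x hx, fun y hy ⟨j, hjx, hjy⟩ => ?_⟩
  obtain ⟨p, hp, -⟩ := hT.connected.exists_path_of_dist r j
  have hx_mem : top x ∈ p.support := by
    obtain ⟨g, -, -, -, rfl⟩ := hT.isAcyclic.eq_append_of_isPath_of_closest hT.connected
      (hA x hx) (htop x hx) (htop_min x hx) hjx hp
    exact (Walk.mem_support_append_iff _ _).mpr (Or.inl g.end_mem_support)
  obtain ⟨g, q, hg, hqA, rfl⟩ := hT.isAcyclic.eq_append_of_isPath_of_closest hT.connected
    (hA y hy) (htop y hy) (htop_min y hy) hjy hp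
  rcases (Walk.mem_support_append_iff _ _).mp hx_mem with hxg | hxq
  · by_contra hxy
    have hne : top x ≠ top y := fun h => hxy (h ▸ htop y hy)
    exact (hx_max y hy).not_gt (g.dist_lt_of_length_eq_dist hg hxg hne)
  · exact hqA _ hxq

end SimpleGraph

open SimpleGraph

theorem TreewidthAtMost.degenerate {V : Type} [Finite V] {G : SimpleGraph V} {w : ℕ}
    (h : TreewidthAtMost G w) : Degenerate G w := by
  classical
  obtain ⟨ι, T, B, hTc, hTa, -, hedge, hconn, hcard⟩ := h
  intro s hs
  obtain ⟨v, hv, i, hvi, hi⟩ := IsTree.exists_mem_forall_mem_of_inter_nonempty ⟨hTc, hTa⟩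
    (fun v => {i | v ∈ B i}) s.toFinite hs fun v _ => hconn v
  have hsub : G.neighborSet v ∩ s ⊆ ↑((B i).erase v) := by
    rintro u ⟨hvu, hu⟩
    obtain ⟨j, hvj, huj⟩ := hedge hvu
    exact Finset.mem_erase.mpr ⟨hvu.ne', hi u hu ⟨j, hvj, huj⟩⟩
  refine ⟨v, hv, ?_⟩
  calc (G.neighborSet v ∩ s).ncard ≤ ((B i).erase v).card :=
        (Set.ncard_le_ncard hsub).trans (Set.ncard_coe_finset _).le
    _ = (B i).card - 1 := Finset.card_erase_of_mem hvi
    _ ≤ w := by have := hcard i; omega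

theorem Degenerate.colorable {V : Type} [Finite V] {G : SimpleGraph V} {w : ℕ}
    (h : Degenerate G w) : G.Colorable (w + 1) := by
  classical
  have : Fintype V := Fintype.ofFinite V
  suffices ∀ s : Finset V, ∃ c : V → Fin (w + 1), ∀ a ∈ s, ∀ b ∈ s, G.Adj a b → c a ≠ c b by
    obtain ⟨c, hc⟩ := this Finset.univ
    exact ⟨Coloring.mk c fun hab => hc _ (Finset.mem_univ _) _ (Finset.mem_univ _) hab⟩
  intro s
  induction s using Finset.strongInduction with
  | H s ih =>
  rcases s.eq_empty_or_nonempty with rfl | hs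
  · exact ⟨0, by simp⟩
  obtain ⟨v, hv, hdeg⟩ := h s (by exact_mod_cast hs)
  obtain ⟨c, hc⟩ := ih (s.erase v) (Finset.erase_ssubset hv)
  obtain ⟨col, hcol⟩ : ∃ col, col ∉ c '' (G.neighborSet v ∩ s) := by
    by_contra! hall
    have := calc w + 1 = (Set.univ : Set (Fin (w + 1))).ncard := by simp
      _ ≤ (c '' (G.neighborSet v ∩ s)).ncard := Set.ncard_le_ncard fun a _ => hall a
      _ ≤ (G.neighborSet v ∩ s).ncard := Set.ncard_image_le (Set.toFinite _)
    omega
  refine ⟨Function.update c v col, fun a ha b hb hab => ?_⟩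
  rcases eq_or_ne a v with rfl | hav
  · rw [Function.update_self, Function.update_of_ne hab.ne']
    exact fun h => hcol ⟨b, ⟨hab, hb⟩, h.symm⟩
  rcases eq_or_ne b v with rfl | hbv
  · rw [Function.update_self, Function.update_of_ne hab.ne]
    exact fun h => hcol ⟨a, ⟨hab.symm, ha⟩, h⟩
  rw [Function.update_of_ne hav, Function.update_of_ne hbv]
  exact hc a (Finset.mem_erase.mpr ⟨hav, ha⟩) b (Finset.mem_erase.mpr ⟨hbv, hb⟩) hab

/-- `edgeNear` is distance at most one in the line graph. -/
def lineGraphSquare {V : Type} (G : SimpleGraph V) : SimpleGraph G.edgeSet :=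
  SimpleGraph.fromRel fun e f => edgeNear G e f

theorem strongChromaticIndex_le_of_colorable {V : Type} {G : SimpleGraph V} {n : ℕ}
    (h : (lineGraphSquare G).Colorable n) (hn : 0 < n) : strongChromaticIndex G ≤ n := by
  classical
  obtain ⟨C⟩ := h
  refine Nat.sInf_le ⟨fun e => if he : e ∈ G.edgeSet then C ⟨e, he⟩ else ⟨0, hn⟩, fun col => ?_⟩
  refine ⟨fun e he => he.1, ?_⟩
  rintro e ⟨he, rfl⟩ f ⟨hf, hcol⟩ hef a ha b hb
  have hnear : ¬ edgeNear G e f := fun hnear =>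
    C.valid ((fromRel_adj _ _ _).mpr ⟨fun h => hef (congrArg Subtype.val h), Or.inl hnear⟩)
      (by simpa only [dif_pos he, dif_pos hf] using hcol.symm)
  exact ⟨fun h => hnear ⟨a, ha, b, hb, Or.inl h⟩, fun h => hnear ⟨a, ha, b, hb, Or.inr h⟩⟩

theorem TreewidthAtMost.lineGraphSquare {V : Type} [Fintype V] {G : SimpleGraph V} {k Δ : ℕ}
    (h : TreewidthAtMost G k) (hΔ : ∀ v, (G.neighborSet v).ncard ≤ Δ) :
    TreewidthAtMost (lineGraphSquare G) ((k + 1) * Δ - 1) := by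
  classical
  obtain ⟨ι, T, B, hTc, hTa, hvert, hedge, hconn, hcard⟩ := h
  let B' : ι → Finset G.edgeSet := fun i =>
    ((B i).biUnion fun a => G.incidenceFinset a).subtype (· ∈ G.edgeSet)
  have hB' : ∀ i (e : G.edgeSet), e ∈ B' i ↔ ∃ a ∈ (e : Sym2 V), a ∈ B i := by
    intro i e
    simp only [B', Finset.mem_subtype, Finset.mem_biUnion, mem_incidenceFinset, incidenceSet,
      Set.mem_ofPred_eq]
    exact ⟨fun ⟨a, ha, _, hae⟩ => ⟨a, hae, ha⟩, fun ⟨a, hae, ha⟩ => ⟨a, ha, e.2, hae⟩⟩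
  have hnear : ∀ e f : G.edgeSet, edgeNear G e f → ∃ i, e ∈ B' i ∧ f ∈ B' i := by
    rintro e f ⟨a, ha, b, hb, rfl | hab⟩
    · obtain ⟨i, hi⟩ := hvert a
      exact ⟨i, (hB' i e).mpr ⟨a, ha, hi⟩, (hB' i f).mpr ⟨a, hb, hi⟩⟩
    · obtain ⟨i, hai, hbi⟩ := hedge hab
      exact ⟨i, (hB' i e).mpr ⟨a, ha, hai⟩, (hB' i f).mpr ⟨b, hb, hbi⟩⟩
  refine ⟨ι, T, B', hTc, hTa, fun e => ?_, ?_, fun e => ?_, fun i => ?_⟩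
  · obtain ⟨i, hi⟩ := hvert (e : Sym2 V).out.1
    exact ⟨i, (hB' i e).mpr ⟨_, Sym2.out_fst_mem _, hi⟩⟩
  · rintro e f ⟨-, hef | hfe⟩
    · exact hnear e f hef
    · exact (hnear f e hfe).imp fun _ => And.symm
  · obtain ⟨⟨u, v⟩, huv⟩ := e
    have hbags : {i | (⟨s(u, v), huv⟩ : G.edgeSet) ∈ B' i} = {i | u ∈ B i} ∪ {i | v ∈ B i} := by
      ext i
      simp [hB']
    rw [hbags]
    obtain ⟨i, hui, hvi⟩ := hedge huv
    exact induce_union_connected (hconn u).preconnected (hconn v).preconnected ⟨i, hui, hvi⟩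
  · calc (B' i).card ≤ ((B i).biUnion fun a => G.incidenceFinset a).card :=
          (Finset.card_subtype _ _).trans_le (Finset.card_filter_le _ _)
      _ ≤ ∑ a ∈ B i, G.degree a := by
          simp only [← card_incidenceFinset_eq_degree]
          exact Finset.card_biUnion_le
      _ ≤ ∑ _a ∈ B i, Δ := Finset.sum_le_sum fun a _ => by
          rw [← card_neighborSet_eq_degree, ← Nat.card_eq_fintype_card, Nat.card_coe_set_eq]
          exact hΔ a
      _ ≤ (k + 1) * Δ := by rw [Finset.sum_const, smul_eq_mul]; gcongr; exact hcard i
      _ ≤ (k + 1) * Δ - 1 + 1 := by omega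

theorem stmt5 {V : Type} [Fintype V] (G : SimpleGraph V) (k Δ : ℕ)
    (htw : TreewidthAtMost G k) (hΔ : ∀ v, (G.neighborSet v).ncard ≤ Δ) :
    strongChromaticIndex G ≤ (k + 1) * (Δ + 1) := by
  have hcol := (htw.lineGraphSquare hΔ).degenerate.colorable
  refine strongChromaticIndex_le_of_colorable (hcol.mono ?_) (by positivity)
  rw [mul_add_one]
  omega
end

section
/- For every even Δ ≥ 2, the graph obtained from the 5-cycle C₅ by replacing each vertex with an independent set of size Δ/2 (and each edge by a complete bipartite graph between the corresponding sets) has maximum degree Δ and strong chromatic index exactly (5/4)Δ². -/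
/-- The blow-up of the 5-cycle by independent sets of size `t`. -/
def blowupC5 (t : ℕ) : SimpleGraph (Fin 5 × Fin t) :=
  SimpleGraph.fromRel (fun p q => p.1 = q.1 + 1)

namespace AuxStmt7

lemma adj_iff {t : ℕ} {p q : Fin 5 × Fin t} :
    (blowupC5 t).Adj p q ↔ p ≠ q ∧ (p.1 = q.1 + 1 ∨ q.1 = p.1 + 1) := by
  simp [blowupC5, SimpleGraph.fromRel_adj]

lemma adj_of_rel {t : ℕ} {p q : Fin 5 × Fin t}
    (h : p.1 = q.1 + 1 ∨ q.1 = p.1 + 1) : (blowupC5 t).Adj p q := by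
  rw [adj_iff]
  refine ⟨?_, h⟩
  have h5 : ∀ x : Fin 5, x ≠ x + 1 := by decide
  rintro rfl
  rcases h with h | h <;> exact h5 _ h

lemma exists_orient {t : ℕ} {e : Sym2 (Fin 5 × Fin t)}
    (he : e ∈ (blowupC5 t).edgeSet) :
    ∃ p q : Fin 5 × Fin t, e = s(p, q) ∧ p.1 = q.1 + 1 := by
  induction e using Sym2.ind with
  | _ p q =>
    rw [SimpleGraph.mem_edgeSet, adj_iff] at he
    rcases he.2 with h | h
    · exact ⟨p, q, rfl, h⟩
    · exact ⟨q, p, Sym2.eq_swap, h⟩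

lemma helper : ∀ i j : Fin 5,
    (i = (j + 1) + 1 ∨ (j + 1) = i + 1) ∨ (i = j + 1 ∨ j = i + 1) ∨
      ((i + 1) = j + 1 ∨ j = (i + 1) + 1) := by decide

lemma near {t : ℕ} (e f : Sym2 (Fin 5 × Fin t))
    (he : e ∈ (blowupC5 t).edgeSet) (hf : f ∈ (blowupC5 t).edgeSet) :
    ∃ a ∈ e, ∃ b ∈ f, a = b ∨ (blowupC5 t).Adj a b := by
  obtain ⟨p, q, rfl, hpq⟩ := exists_orient he
  obtain ⟨r, s, rfl, hrs⟩ := exists_orient hf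
  rcases helper q.1 s.1 with h | h | h
  · exact ⟨q, by simp, r, by simp, Or.inr (adj_of_rel (by rw [hrs]; exact h))⟩
  · exact ⟨q, by simp, s, by simp, Or.inr (adj_of_rel h)⟩
  · exact ⟨p, by simp, s, by simp, Or.inr (adj_of_rel (by rw [hpq]; exact h))⟩

/-- encoding equivalence -/
def E (t : ℕ) : Fin 5 × Fin t × Fin t ≃ Fin (5 * (t * t)) :=
  (Equiv.prodCongr (Equiv.refl (Fin 5)) finProdFinEquiv).trans finProdFinEquiv

def fcol (t : ℕ) (ht : 0 < t) (p q : Fin 5 × Fin t) : Fin (5 * (t * t)) :=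
  if p.1 = q.1 + 1 then E t (q.1, p.2, q.2)
  else if q.1 = p.1 + 1 then E t (p.1, q.2, p.2)
  else E t (0, ⟨0, ht⟩, ⟨0, ht⟩)

lemma not_both {i : Fin 5} (h : i = i + 1 + 1) : False := by
  revert h; revert i; decide

lemma fcol_symm (t : ℕ) (ht : 0 < t) (p q : Fin 5 × Fin t) :
    fcol t ht p q = fcol t ht q p := by
  unfold fcol
  have hq : ¬ q.1 = q.1 + 1 + 1 := fun hh => not_both hh
  have hp : ¬ p.1 = p.1 + 1 + 1 := fun hh => not_both hh
  by_cases h : p.1 = q.1 + 1 <;> by_cases h' : q.1 = p.1 + 1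
  · exact absurd (by rw [h] at h'; exact h') (fun hh => not_both hh)
  · simp [h, h', hq]
  · simp [h, h', hp]
  · simp [h, h']

def ccol (t : ℕ) (ht : 0 < t) : Sym2 (Fin 5 × Fin t) → Fin (5 * (t * t)) :=
  Sym2.lift ⟨fcol t ht, fcol_symm t ht⟩

lemma ccol_val {t : ℕ} (ht : 0 < t) {p q : Fin 5 × Fin t} (h : p.1 = q.1 + 1) :
    ccol t ht s(p, q) = E t (q.1, p.2, q.2) := by
  simp [ccol, fcol, h]

lemma ccol_inj {t : ℕ} (ht : 0 < t) {e f : Sym2 (Fin 5 × Fin t)}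
    (he : e ∈ (blowupC5 t).edgeSet) (hf : f ∈ (blowupC5 t).edgeSet)
    (hc : ccol t ht e = ccol t ht f) : e = f := by
  obtain ⟨p, q, rfl, hpq⟩ := exists_orient he
  obtain ⟨r, s, rfl, hrs⟩ := exists_orient hf
  rw [ccol_val ht hpq, ccol_val ht hrs] at hc
  have h3 := (E t).injective hc
  obtain ⟨h1, h2, h4⟩ : q.1 = s.1 ∧ p.2 = r.2 ∧ q.2 = s.2 := by
    simpa [Prod.ext_iff] using h3
  have hpr : p = r := Prod.ext (by rw [hpq, h1, ← hrs]) h2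
  have hqs : q = s := Prod.ext h1 h4
  rw [hpr, hqs]

lemma mem_S {t : ℕ} (ht : 0 < t) :
    ∃ c : Sym2 (Fin 5 × Fin t) → Fin (5 * (t * t)),
      IsStrongEdgeColoring (blowupC5 t) c := by
  refine ⟨ccol t ht, fun k => ⟨fun e he => he.1, ?_⟩⟩
  intro e he f hf hne
  exact absurd (ccol_inj ht he.1 hf.1 (he.2.trans hf.2.symm)) hne

lemma strong_inj {t n : ℕ} {c : Sym2 (Fin 5 × Fin t) → Fin n}
    (hc : IsStrongEdgeColoring (blowupC5 t) c)
    {e f : Sym2 (Fin 5 × Fin t)} (he : e ∈ (blowupC5 t).edgeSet)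
    (hf : f ∈ (blowupC5 t).edgeSet) (hef : c e = c f) : e = f := by
  by_contra hne
  obtain ⟨a, ha, b, hb, hab⟩ := near e f he hf
  obtain ⟨h1, h2⟩ := (hc (c e)).2 e ⟨he, rfl⟩ f ⟨hf, hef.symm⟩ hne a ha b hb
  rcases hab with rfl | h
  · exact h1 rfl
  · exact h2 h

lemma lower {t : ℕ} (ht : 0 < t) {n : ℕ} (c : Sym2 (Fin 5 × Fin t) → Fin n)
    (hc : IsStrongEdgeColoring (blowupC5 t) c) : 5 * (t * t) ≤ n := by
  have hinj : Function.Injective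
      (fun v : Fin 5 × Fin t × Fin t => c s(((v.1 + 1 : Fin 5), v.2.1), (v.1, v.2.2))) := by
    rintro ⟨i, x, y⟩ ⟨j, u, v⟩ h
    have he : s(((i + 1 : Fin 5), x), ((i, y) : Fin 5 × Fin t)) ∈ (blowupC5 t).edgeSet :=
      (SimpleGraph.mem_edgeSet _).2 (adj_of_rel (Or.inl rfl))
    have hf : s(((j + 1 : Fin 5), u), ((j, v) : Fin 5 × Fin t)) ∈ (blowupC5 t).edgeSet :=
      (SimpleGraph.mem_edgeSet _).2 (adj_of_rel (Or.inl rfl))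
    have heq := strong_inj hc he hf h
    rw [Sym2.eq_iff] at heq
    rcases heq with ⟨h1, h2⟩ | ⟨h1, h2⟩
    · have hij : i = j := congrArg Prod.fst h2
      have hxu : x = u := congrArg Prod.snd h1
      have hyv : y = v := congrArg Prod.snd h2
      rw [hij, hxu, hyv]
    · exfalso
      have h1'' : i + 1 = j := congrArg Prod.fst h1
      have h2'' : i = j + 1 := congrArg Prod.fst h2
      rw [← h1''] at h2''
      exact (by decide : ∀ i : Fin 5, ¬ i = i + 1 + 1) i h2''
  calc 5 * (t * t) = Fintype.card (Fin 5 × Fin t × Fin t) := by simp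
    _ ≤ Fintype.card (Fin n) := Fintype.card_le_of_injective _ hinj
    _ = n := by simp

lemma sCI {t : ℕ} (ht : 0 < t) :
    strongChromaticIndex (blowupC5 t) = 5 * (t * t) := by
  unfold strongChromaticIndex
  apply le_antisymm
  · exact Nat.sInf_le (mem_S ht)
  · have hne : {n : ℕ | ∃ c : Sym2 (Fin 5 × Fin t) → Fin n,
        IsStrongEdgeColoring (blowupC5 t) c}.Nonempty := ⟨5 * (t * t), mem_S ht⟩
    apply le_csInf hne
    rintro n ⟨c, hc⟩
    exact lower ht c hc

lemma deg {t : ℕ} (v : Fin 5 × Fin t) :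
    ((blowupC5 t).neighborSet v).ncard = 2 * t := by
  have hsub : ∀ y : Fin t, ((v.1 - 1, y) : Fin 5 × Fin t) ∈ (blowupC5 t).neighborSet v := by
    intro y
    exact adj_of_rel (Or.inl (by simp))
  have hadd : ∀ y : Fin t, ((v.1 + 1, y) : Fin 5 × Fin t) ∈ (blowupC5 t).neighborSet v := by
    intro y
    exact adj_of_rel (Or.inr rfl)
  have hne5 : ∀ x : Fin 5, x + 1 ≠ x - 1 := by decide
  have e : Fin t ⊕ Fin t ≃ ((blowupC5 t).neighborSet v) := by
    refine Equiv.ofBijective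
      (Sum.elim (fun y => ⟨(v.1 + 1, y), hadd y⟩) (fun y => ⟨(v.1 - 1, y), hsub y⟩)) ⟨?_, ?_⟩
    · rintro (y | y) (z | z) h <;> simp only [Sum.elim_inl, Sum.elim_inr, Subtype.mk.injEq,
        Prod.mk.injEq] at h
      · rw [h.2]
      · exact absurd h.1 (hne5 v.1)
      · exact absurd h.1.symm (hne5 v.1)
      · rw [h.2]
    · rintro ⟨b, hb⟩
      rw [SimpleGraph.mem_neighborSet, adj_iff] at hb
      rcases hb.2 with h | h
      · refine ⟨Sum.inr b.2, ?_⟩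
        simp only [Sum.elim_inr, Subtype.mk.injEq]
        exact Prod.ext (by rw [eq_sub_of_add_eq h.symm]) rfl
      · refine ⟨Sum.inl b.2, ?_⟩
        simp only [Sum.elim_inl, Subtype.mk.injEq]
        exact Prod.ext h.symm rfl
  rw [← Nat.card_coe_set_eq, ← Nat.card_congr e]
  simp [Nat.card_eq_fintype_card, two_mul]

end AuxStmt7

theorem stmt7 (Δ : ℕ) (hΔ : 2 ≤ Δ) (heven : Even Δ) :
    (∀ v, ((blowupC5 (Δ / 2)).neighborSet v).ncard ≤ Δ) ∧
    (∃ v, ((blowupC5 (Δ / 2)).neighborSet v).ncard = Δ) ∧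
    4 * strongChromaticIndex (blowupC5 (Δ / 2)) = 5 * Δ ^ 2 := by
  obtain ⟨k, hk⟩ := heven
  have ht : Δ / 2 = k := by omega
  have hk0 : 0 < Δ / 2 := by omega
  refine ⟨?_, ?_, ?_⟩
  · intro v; rw [AuxStmt7.deg]; omega
  · exact ⟨(0, ⟨0, hk0⟩), by rw [AuxStmt7.deg]; omega⟩
  · rw [AuxStmt7.sCI hk0, ht, hk]; ring
end

section
/- Every chordless graph is 2-degenerate. -/
/-!
Given a nonempty vertex set `s`, take a longest path `p` inside `s` and let `u` be its first
vertex: by maximality every neighbour of `u` in `s` lies on `p`. If `w` is the last of them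
along `p`, the segment of `p` from `u` to `w` closes with the edge `wu` into a cycle (or is that
edge). All neighbours of `u` on `p` lie on it, and since the cycle has no chord, each of them is
adjacent to `u` along the cycle, i.e. it is `w` or the second vertex of `p`. So `u` has at most
two neighbours in `s`.
-/

open SimpleGraph

variable {V : Type} {G : SimpleGraph V}

lemma SimpleGraph.exists_isPath_neighborSet_inter_subset_support [Finite V] {s : Set V}
    (hs : s.Nonempty) :
    ∃ (u v : V) (p : G.Walk u v), p.IsPath ∧ {a | a ∈ p.support} ⊆ s ∧
      G.neighborSet u ∩ s ⊆ {a | a ∈ p.support} := by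
  have := Fintype.ofFinite V
  by_contra! hextend
  have hlong : ∀ n, ∃ (u v : V) (p : G.Walk u v), p.IsPath ∧ {a | a ∈ p.support} ⊆ s ∧
      p.length = n := by
    intro n
    induction n with
    | zero =>
      obtain ⟨v, hv⟩ := hs
      exact ⟨v, v, .nil, .nil, by simpa using hv, rfl⟩
    | succ n ih =>
      obtain ⟨u, v, p, hp, hps, rfl⟩ := ih
      obtain ⟨w, ⟨huw, hws⟩, hwp⟩ := Set.not_subset.1 (hextend u v p hp hps)
      refine ⟨w, v, .cons huw.symm p, hp.cons hwp, ?_, rfl⟩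
      intro a ha
      obtain rfl | ha := List.mem_cons.1 ha
      exacts [hws, hps ha]
  obtain ⟨u, v, p, hp, -, hlen⟩ := hlong (Fintype.card V)
  exact hp.length_lt.ne hlen

lemma Chordless.eq_or_eq_snd_of_adj (hc : Chordless G) {u x a : V} {p : G.Walk u x}
    (hp : p.IsPath) (hux : G.Adj u x) (ha : a ∈ p.support) (hua : G.Adj u a) :
    a = x ∨ a = p.snd := by
  by_cases hxu : s(x, u) ∈ p.edges
  · left
    cases p with
    | nil => exact (G.irrefl hux).elim
    | cons _ q =>
      rw [Walk.cons_isPath_iff] at hp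
      rw [Walk.edges_cons, List.mem_cons] at hxu
      rcases hxu with hxu | hxu
      · obtain rfl : x = _ := by simpa [hux.ne.symm] using hxu
        have hq : q.Nil := Walk.isPath_iff_nil.1 hp.1
        simpa [hq.eq_nil, hua.ne'] using ha
      · exact (hp.2 (q.snd_mem_support_of_mem_edges hxu)).elim
  · have hcycle : (Walk.cons hux.symm p).IsCycle := (Walk.cons_isCycle_iff p hux.symm).2 ⟨hp, hxu⟩
    have hchord := hc x _ hcycle u (by simp) a (by simp [ha]) hua
    rw [Walk.edges_cons, List.mem_cons] at hchord
    rcases hchord with h | h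
    · left
      simpa [hux.ne] using h
    · exact .inr (hp.eq_snd_of_mem_edges h)

lemma Chordless.ncard_neighborSet_inter_support_le_two (hc : Chordless G) {u v : V}
    {p : G.Walk u v} (hp : p.IsPath) : (G.neighborSet u ∩ {a | a ∈ p.support}).ncard ≤ 2 := by
  classical
  rcases (G.neighborSet u ∩ {a | a ∈ p.support}).eq_empty_or_nonempty with hempty | ⟨a, hua, ha⟩
  · simp [hempty]
  -- `p.getVert n` is the last neighbour of `u` along `p`.
  set n := Nat.findGreatest (fun i ↦ G.Adj u (p.getVert i)) p.length
  have hn : G.Adj u (p.getVert n) := by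
    obtain ⟨i, rfl, hi⟩ := Walk.mem_support_iff_exists_getVert.1 ha
    exact Nat.findGreatest_spec (P := fun i ↦ G.Adj u (p.getVert i)) hi hua
  have hsub : G.neighborSet u ∩ {a | a ∈ p.support} ⊆ {p.getVert n, (p.take n).snd} := by
    rintro a ⟨hua, ha⟩
    obtain ⟨i, rfl, hi⟩ := Walk.mem_support_iff_exists_getVert.1 ha
    have hin : i ≤ n := Nat.le_findGreatest hi hua
    have ha' : p.getVert i ∈ (p.take n).support := by
      rw [← min_eq_right hin, ← Walk.take_getVert]
      exact Walk.getVert_mem_support _ _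
    exact hc.eq_or_eq_snd_of_adj (hp.take n) hn ha' hua
  calc (G.neighborSet u ∩ {a | a ∈ p.support}).ncard
      ≤ ({p.getVert n, (p.take n).snd} : Set V).ncard := Set.ncard_le_ncard hsub
    _ ≤ 2 := (Set.ncard_insert_le _ _).trans (by simp)

theorem stmt8 {V : Type} [Fintype V] (G : SimpleGraph V) (hc : Chordless G) :
    Degenerate G 2 := by
  intro s hs
  obtain ⟨u, v, p, hp, hps, hnbr⟩ := G.exists_isPath_neighborSet_inter_subset_support hs
  refine ⟨u, hps p.start_mem_support, ?_⟩
  calc (G.neighborSet u ∩ s).ncard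
      ≤ (G.neighborSet u ∩ {a | a ∈ p.support}).ncard :=
        Set.ncard_le_ncard (Set.subset_inter Set.inter_subset_left hnbr)
    _ ≤ 2 := hc.ncard_neighborSet_inter_support_le_two hp
end
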